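/- Let M and N be matroids of ranks r and s on the same ground set E such that every flat of N is a flat of M. Fix a finite set R disjoint from E with |R| = r − s. Then the function on subsets of E ⊔ R defined by rank_Q(I ⊔ J) = min{rank_M(I) + |J|, rank_N(I) + r − s} (for I ⊆ E, J ⊆ R) is the rank function of a matroid Q on E ⊔ R. -/

import Mathlib

/-- A matroid given by its rank function on subsets of a finite ground set. -/
structure MatroidRank (α : Type) [DecidableEq α] [Fintype α] where
  r : Finset α → ℕ
  r_empty : r ∅ = 0
  r_le_insert : ∀ A x, r A ≤ r (insert x A)
  insert_le : ∀ A x, r (insert x A) ≤ r A + 1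
  r_local : ∀ A x y, r (insert x A) = r A → r (insert y A) = r A →
    r (insert x (insert y A)) = r A

variable {α : Type} [DecidableEq α] [Fintype α]

/-- `F` is a flat (closed set) of the matroid `M`. -/
def MatroidRank.IsFlat (M : MatroidRank α) (F : Finset α) : Prop :=
  ∀ x ∉ F, M.r F < M.r (insert x F)

/-- Closure of a set in the matroid `M`. -/
def MatroidRank.cl (M : MatroidRank α) (A : Finset α) : Finset α :=
  Finset.univ.filter (fun x => M.r (insert x A) = M.r A)

/-- The matroid `M` has no loops. -/
def MatroidRank.Loopfree (M : MatroidRank α) : Prop :=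
  ∀ x : α, M.r {x} = 1


/-- the part of a subset of a disjoint union lying in the first factor. -/
def leftPart {β : Type} [DecidableEq β] [Fintype β] (S : Finset (α ⊕ β)) : Finset α :=
  Finset.univ.filter (fun a => Sum.inl a ∈ S)

/-- the part of a subset of a disjoint union lying in the second factor. -/
def rightPart {β : Type} [DecidableEq β] [Fintype β] (S : Finset (α ⊕ β)) : Finset β :=
  Finset.univ.filter (fun b => Sum.inr b ∈ S)


/-!
The function is `min (f S) (g S + |R|)`, where `f` is the rank function of the direct sum of `M`
with the free matroid on `R` and `g` that of `N` with every element of `R` a loop. The condition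
on flats says that `cl_M A ⊆ cl_N A` for every `A`, i.e. `N` is a quotient of `M`, and this
survives the direct sums. For two rank functions `f`, `g` in this relation, `min f (g + k)` is again
a rank function for every `k`: an element whose addition does not raise the minimum cannot raise
`g`, and, when `f` is the smaller term, cannot raise `f` either, so local submodularity is
inherited from whichever term realises the minimum.
-/

namespace MatroidRank

section Basic

variable (M : MatroidRank α)

lemma r_le_union (A C : Finset α) : M.r A ≤ M.r (A ∪ C) := by
  induction C using Finset.induction_on with
  | empty => simp
  | insert a C _ ih =>
    rw [Finset.union_insert]
    exact ih.trans (M.r_le_insert _ a)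

lemma r_mono {A B : Finset α} (h : A ⊆ B) : M.r A ≤ M.r B := by
  simpa [Finset.union_eq_right.mpr h] using M.r_le_union A B

lemma r_insert_union_eq {x : α} {A : Finset α} (h : M.r (insert x A) = M.r A)
    (C : Finset α) : M.r (insert x (A ∪ C)) = M.r (A ∪ C) := by
  induction C using Finset.induction_on with
  | empty => simpa
  | insert a C _ ih =>
    rw [Finset.union_insert]
    by_cases ha : M.r (insert a (A ∪ C)) = M.r (A ∪ C)
    · exact (M.r_local _ x a ih ha).trans ha.symm
    · have h₁ := M.insert_le (A ∪ C) a
      have h₂ := M.r_le_insert (A ∪ C) a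
      have h₃ := M.insert_le (insert x (A ∪ C)) a
      have h₄ : M.r (insert a (A ∪ C)) ≤ M.r (insert a (insert x (A ∪ C))) :=
        M.r_mono (Finset.insert_subset_insert _ (Finset.subset_insert _ _))
      rw [Finset.insert_comm]
      omega

lemma r_insert_eq_of_subset {x : α} {A B : Finset α} (h : M.r (insert x A) = M.r A)
    (hAB : A ⊆ B) : M.r (insert x B) = M.r B := by
  simpa [Finset.union_eq_right.mpr hAB] using M.r_insert_union_eq h B

lemma r_union_eq_of_forall {A C : Finset α} (h : ∀ x ∈ C, M.r (insert x A) = M.r A) :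
    M.r (A ∪ C) = M.r A := by
  induction C using Finset.induction_on with
  | empty => simp
  | insert a C _ ih =>
    rw [Finset.union_insert, M.r_insert_union_eq (h a (Finset.mem_insert_self a C)) C]
    exact ih fun x hx => h x (Finset.mem_insert_of_mem hx)

lemma mem_cl {x : α} {A : Finset α} : x ∈ M.cl A ↔ M.r (insert x A) = M.r A := by
  simp [cl]

lemma subset_cl (A : Finset α) : A ⊆ M.cl A := fun x hx =>
  M.mem_cl.mpr (by rw [Finset.insert_eq_self.mpr hx])

lemma r_cl (A : Finset α) : M.r (M.cl A) = M.r A := by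
  simpa [Finset.union_eq_right.mpr (M.subset_cl A)] using
    M.r_union_eq_of_forall (C := M.cl A) fun _ hx => M.mem_cl.mp hx

lemma isFlat_cl (A : Finset α) : M.IsFlat (M.cl A) := by
  intro x hx
  have h₁ := M.r_le_insert (M.cl A) x
  suffices M.r (insert x (M.cl A)) ≠ M.r (M.cl A) by omega
  intro heq
  refine hx (M.mem_cl.mpr ?_)
  have h₂ : M.r (insert x A) ≤ M.r (insert x (M.cl A)) :=
    M.r_mono (Finset.insert_subset_insert _ (M.subset_cl A))
  have h₃ := M.r_cl A
  have h₄ := M.r_le_insert A x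
  omega

end Basic

section Quotient

/-- `N` is a quotient of `M`: whatever a set spans in `M`, it spans in `N`. -/
def IsQuotient (N M : MatroidRank α) : Prop :=
  ∀ A, M.cl A ⊆ N.cl A

variable {M N : MatroidRank α}

lemma IsQuotient.r_insert_eq (hq : N.IsQuotient M) {x : α} {A : Finset α}
    (h : M.r (insert x A) = M.r A) : N.r (insert x A) = N.r A :=
  N.mem_cl.mp (hq A (M.mem_cl.mpr h))

lemma isQuotient_of_forall_r_insert_eq
    (h : ∀ A x, M.r (insert x A) = M.r A → N.r (insert x A) = N.r A) : N.IsQuotient M :=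
  fun A x hx => N.mem_cl.mpr (h A x (M.mem_cl.mp hx))

lemma isQuotient_of_isFlat (hflats : ∀ F, N.IsFlat F → M.IsFlat F) : N.IsQuotient M := by
  refine isQuotient_of_forall_r_insert_eq fun A x h => N.mem_cl.mp ?_
  by_contra hx
  have hlt := hflats _ (N.isFlat_cl A) x hx
  have := M.r_insert_eq_of_subset h (N.subset_cl A)
  omega

end Quotient

section MinShift

variable {M N : MatroidRank α}

lemma min_r_le_insert (k : ℕ) (A : Finset α) (x : α) :
    min (M.r A) (N.r A + k) ≤ min (M.r (insert x A)) (N.r (insert x A) + k) := by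
  have := M.r_le_insert A x
  have := N.r_le_insert A x
  omega

lemma IsQuotient.r_insert_eq_of_min_eq (hq : N.IsQuotient M) {k : ℕ} {x : α} {A : Finset α}
    (h : min (M.r (insert x A)) (N.r (insert x A) + k) = min (M.r A) (N.r A + k)) :
    N.r (insert x A) = N.r A := by
  by_cases hM : M.r (insert x A) = M.r A
  · exact hq.r_insert_eq hM
  · have := M.r_le_insert A x
    have := M.insert_le A x
    have := N.r_le_insert A x
    omega

lemma IsQuotient.min_r_local (hq : N.IsQuotient M) (k : ℕ) (A : Finset α) (x y : α)
    (hx : min (M.r (insert x A)) (N.r (insert x A) + k) = min (M.r A) (N.r A + k))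
    (hy : min (M.r (insert y A)) (N.r (insert y A) + k) = min (M.r A) (N.r A + k)) :
    min (M.r (insert x (insert y A))) (N.r (insert x (insert y A)) + k) =
      min (M.r A) (N.r A + k) := by
  have hNx := hq.r_insert_eq_of_min_eq hx
  have hNy := hq.r_insert_eq_of_min_eq hy
  have hNxy := N.r_local A x y hNx hNy
  have hle := (min_r_le_insert (M := M) (N := N) k A y).trans (min_r_le_insert k _ x)
  by_cases hlt : M.r A < N.r A + k
  · -- the minimum is the `M`-term, so neither `x` nor `y` raises `M`
    have := M.r_le_insert A x
    have := M.r_le_insert A y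
    have hMxy := M.r_local A x y (by omega) (by omega)
    omega
  · omega

def IsQuotient.minShift (hq : N.IsQuotient M) (k : ℕ) : MatroidRank α where
  r A := min (M.r A) (N.r A + k)
  r_empty := by simp [M.r_empty]
  r_le_insert := min_r_le_insert k
  insert_le A x := by
    have := M.insert_le A x
    have := N.insert_le A x
    omega
  r_local := hq.min_r_local k

end MinShift

section DisjointSum

variable {β : Type} [DecidableEq β] [Fintype β]

@[simp] lemma leftPart_empty : leftPart (∅ : Finset (α ⊕ β)) = ∅ := by
  ext; simp [leftPart]

@[simp] lemma rightPart_empty {γ : Type} [DecidableEq γ] :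
    rightPart (∅ : Finset (γ ⊕ β)) = ∅ := by
  ext; simp [rightPart]

@[simp] lemma leftPart_insert_inl (a : α) (S : Finset (α ⊕ β)) :
    leftPart (insert (Sum.inl a) S) = insert a (leftPart S) := by
  ext; simp [leftPart]

@[simp] lemma rightPart_insert_inl {γ : Type} [DecidableEq γ] (a : γ) (S : Finset (γ ⊕ β)) :
    rightPart (insert (Sum.inl a) S) = rightPart S := by
  ext; simp [rightPart]

@[simp] lemma leftPart_insert_inr (b : β) (S : Finset (α ⊕ β)) :
    leftPart (insert (Sum.inr b) S) = leftPart S := by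
  ext; simp [leftPart]

@[simp] lemma rightPart_insert_inr {γ : Type} [DecidableEq γ] (b : β) (S : Finset (γ ⊕ β)) :
    rightPart (insert (Sum.inr b) S) = insert b (rightPart S) := by
  ext; simp [rightPart]

def disjointSum (M₁ : MatroidRank α) (M₂ : MatroidRank β) : MatroidRank (α ⊕ β) where
  r S := M₁.r (leftPart S) + M₂.r (rightPart S)
  r_empty := by simp [M₁.r_empty, M₂.r_empty]
  r_le_insert S x := by
    cases x with
    | inl a =>
      simp only [leftPart_insert_inl, rightPart_insert_inl]
      have := M₁.r_le_insert (leftPart S) a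
      omega
    | inr b =>
      simp only [leftPart_insert_inr, rightPart_insert_inr]
      have := M₂.r_le_insert (rightPart S) b
      omega
  insert_le S x := by
    cases x with
    | inl a =>
      simp only [leftPart_insert_inl, rightPart_insert_inl]
      have := M₁.insert_le (leftPart S) a
      omega
    | inr b =>
      simp only [leftPart_insert_inr, rightPart_insert_inr]
      have := M₂.insert_le (rightPart S) b
      omega
  r_local S x y hx hy := by
    cases x with
    | inl a =>
      cases y with
      | inl a' =>
        simp only [leftPart_insert_inl, rightPart_insert_inl] at hx hy ⊢
        have := M₁.r_local (leftPart S) a a' (by omega) (by omega)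
        omega
      | inr b =>
        simp only [leftPart_insert_inl, rightPart_insert_inl, leftPart_insert_inr,
          rightPart_insert_inr] at hx hy ⊢
        omega
    | inr b =>
      cases y with
      | inl a =>
        simp only [leftPart_insert_inl, rightPart_insert_inl, leftPart_insert_inr,
          rightPart_insert_inr] at hx hy ⊢
        omega
      | inr b' =>
        simp only [leftPart_insert_inr, rightPart_insert_inr] at hx hy ⊢
        have := M₂.r_local (rightPart S) b b' (by omega) (by omega)
        omega

variable (β) in
def free : MatroidRank β where
  r := Finset.card
  r_empty := Finset.card_empty
  r_le_insert A x := Finset.card_le_card (Finset.subset_insert x A)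
  insert_le A x := Finset.card_insert_le x A
  r_local A x y hx _ := by
    have hxA : x ∈ A := by
      by_contra hxA
      rw [Finset.card_insert_of_notMem hxA] at hx
      omega
    rwa [Finset.insert_eq_self.mpr (Finset.mem_insert_of_mem hxA)]

variable (β) in
def loops : MatroidRank β where
  r _ := 0
  r_empty := rfl
  r_le_insert _ _ := le_rfl
  insert_le _ _ := Nat.zero_le 1
  r_local _ _ _ _ _ := rfl

lemma isQuotient_loops (M : MatroidRank β) : (loops β).IsQuotient M :=
  isQuotient_of_forall_r_insert_eq fun _ _ _ => rfl

lemma IsQuotient.disjointSum {M₁ N₁ : MatroidRank α} {M₂ N₂ : MatroidRank β}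
    (h₁ : N₁.IsQuotient M₁) (h₂ : N₂.IsQuotient M₂) :
    (N₁.disjointSum N₂).IsQuotient (M₁.disjointSum M₂) := by
  refine isQuotient_of_forall_r_insert_eq fun S x h => ?_
  simp only [MatroidRank.disjointSum] at h ⊢
  cases x with
  | inl a =>
    simp only [leftPart_insert_inl, rightPart_insert_inl] at h ⊢
    rw [h₁.r_insert_eq (by omega)]
  | inr b =>
    simp only [leftPart_insert_inr, rightPart_insert_inr] at h ⊢
    rw [h₂.r_insert_eq (by omega)]

end DisjointSum

end MatroidRank

open MatroidRank in
theorem quotient_construction_is_matroid_general (M N : MatroidRank α)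
    (hflats : ∀ F, N.IsFlat F → M.IsFlat F)
    (β : Type) [DecidableEq β] [Fintype β] :
    ∃ Q : MatroidRank (α ⊕ β), ∀ S : Finset (α ⊕ β),
      Q.r S = min (M.r (leftPart S) + (rightPart S).card)
        (N.r (leftPart S) + Fintype.card β) := by
  have hq : (N.disjointSum (loops β)).IsQuotient (M.disjointSum (free β)) :=
    (isQuotient_of_isFlat hflats).disjointSum (isQuotient_loops _)
  exact ⟨hq.minShift (Fintype.card β), fun S => rfl⟩

/-- The function S ↦ min{rank_M(I) + |J|, rank_N(I) + (r−s)} on subsets of E ⊔ R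
(with |R| = r − s) is the rank function of a matroid. -/
theorem quotient_construction_is_matroid (M N : MatroidRank α)
    (hflats : ∀ F, N.IsFlat F → M.IsFlat F)
    (β : Type) [DecidableEq β] [Fintype β]
    (hcard : Fintype.card β + N.r Finset.univ = M.r Finset.univ) :
    ∃ Q : MatroidRank (α ⊕ β), ∀ S : Finset (α ⊕ β),
      Q.r S = min (M.r (leftPart S) + (rightPart S).card)
        (N.r (leftPart S) + Fintype.card β) :=
  quotient_construction_is_matroid_general M N hflats β
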